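/- arXiv:2110.01235 — 10 statements merged into one kernel-verified Lean document; each statement's English description precedes it below -/
import Mathlib

section
/- Let Ω be any family of pairs of supports (S_L, S_R) with S_L an m×r binary matrix and S_R an n×r binary matrix, and let Σ_Ω be the union over (S_L,S_R) ∈ Ω of the sets {(X,Y) : supp(X) ⊆ S_L, supp(Y) ⊆ S_R}. If (X,Y) ∈ Σ_Ω is a PS-unique factorization of XYᵀ in Σ_Ω, then colsupp(X) = colsupp(Y). -/
/-!
If column `j` of `X` is nonzero while column `j` of `Y` vanishes, zeroing column `j` of `X`
changes neither the product `X Yᵀ` nor membership in `Σ_Ω`. PS-uniqueness then writes the new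
left factor as `X G` with `G` a generalized permutation matrix, which is impossible: right
multiplication by `G` preserves the number of nonzero columns, and zeroing column `j` lowers it.
The other inclusion is symmetric, since `(G⁻¹)ᵀ` is again a generalized permutation matrix.
-/

open Matrix

def IsGenPerm {r : ℕ} (G : Matrix (Fin r) (Fin r) ℂ) : Prop :=
  ∃ (σ : Equiv.Perm (Fin r)) (d : Fin r → ℂ),
    (∀ i, d i ≠ 0) ∧ ∀ i j, G i j = if i = σ j then d i else 0

def PSEquiv {m n r : ℕ}
    (p q : Matrix (Fin m) (Fin r) ℂ × Matrix (Fin n) (Fin r) ℂ) : Prop :=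
  ∃ G, IsGenPerm G ∧ q.1 = p.1 * G ∧ q.2 = p.2 * (G⁻¹)ᵀ

def PSUniqueSet {m n r : ℕ}
    (Sig : Set (Matrix (Fin m) (Fin r) ℂ × Matrix (Fin n) (Fin r) ℂ)) :
    Set (Matrix (Fin m) (Fin r) ℂ × Matrix (Fin n) (Fin r) ℂ) :=
  {p | p ∈ Sig ∧ ∀ q ∈ Sig, q.1 * q.2ᵀ = p.1 * p.2ᵀ → PSEquiv p q}

/-- The support of a matrix is contained in the (binary) support `S`. -/
def SuppSub {a b : ℕ} (X : Matrix (Fin a) (Fin b) ℂ) (S : Set (Fin a × Fin b)) : Prop :=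
  ∀ i j, X i j ≠ 0 → (i, j) ∈ S

/-- The column support of a matrix: indices of its nonzero columns. -/
def Colsupp {a b : ℕ} (X : Matrix (Fin a) (Fin b) ℂ) : Set (Fin b) :=
  {j | ∃ i, X i j ≠ 0}

/-- The column support of a support (set of index pairs). -/
def ColsuppS {a b : ℕ} (S : Set (Fin a × Fin b)) : Set (Fin b) :=
  {j | ∃ i, (i, j) ∈ S}

/-- The constraint set Σ_Ω associated with a family of pairs of supports. -/
def SigmaOm {m n r : ℕ} (Om : Set (Set (Fin m × Fin r) × Set (Fin n × Fin r))) :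
    Set (Matrix (Fin m) (Fin r) ℂ × Matrix (Fin n) (Fin r) ℂ) :=
  {p | ∃ S ∈ Om, SuppSub p.1 S.1 ∧ SuppSub p.2 S.2}

theorem mul_genPerm_apply {a r : ℕ} {G : Matrix (Fin r) (Fin r) ℂ} {σ : Equiv.Perm (Fin r)}
    {d : Fin r → ℂ} (hG : ∀ i j, G i j = if i = σ j then d i else 0)
    (W : Matrix (Fin a) (Fin r) ℂ) (i : Fin a) (k : Fin r) :
    (W * G) i k = W i (σ k) * d (σ k) := by
  simp only [Matrix.mul_apply, hG, mul_ite, mul_zero, Finset.sum_ite_eq', Finset.mem_univ, if_true]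

theorem IsGenPerm.ncard_colsupp_mul {a r : ℕ} {G : Matrix (Fin r) (Fin r) ℂ} (hG : IsGenPerm G)
    (W : Matrix (Fin a) (Fin r) ℂ) : (Colsupp (W * G)).ncard = (Colsupp W).ncard := by
  obtain ⟨σ, d, hd, hG⟩ := hG
  have hpre : Colsupp (W * G) = σ ⁻¹' Colsupp W := by
    ext k
    simp [Colsupp, mul_genPerm_apply hG, hd]
  rw [hpre, Set.ncard_preimage_of_injective_subset_range σ.injective (by simp)]

theorem IsGenPerm.inv_transpose {r : ℕ} {G : Matrix (Fin r) (Fin r) ℂ} (hG : IsGenPerm G) :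
    IsGenPerm (G⁻¹)ᵀ := by
  obtain ⟨σ, d, hd, hG⟩ := hG
  set H : Matrix (Fin r) (Fin r) ℂ := Matrix.of fun i j => if i = σ j then (d i)⁻¹ else 0
  have hHG : Hᵀ * G = 1 := by
    ext i k
    rw [mul_genPerm_apply hG, Matrix.transpose_apply, Matrix.one_apply]
    by_cases hik : i = k
    · subst hik; simp [H, hd]
    · simp [H, hik, Ne.symm hik]
  refine ⟨σ, fun i => (d i)⁻¹, fun i => inv_ne_zero (hd i), fun i j => ?_⟩
  rw [Matrix.inv_eq_left_inv hHG, Matrix.transpose_transpose]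
  rfl

theorem colsupp_updateCol_zero {a r : ℕ} (W : Matrix (Fin a) (Fin r) ℂ) (j : Fin r) :
    Colsupp (W.updateCol j 0) = Colsupp W \ {j} := by
  ext k
  by_cases hkj : k = j <;> simp [Colsupp, hkj]

theorem IsGenPerm.updateCol_zero_ne_mul {a r : ℕ} {G : Matrix (Fin r) (Fin r) ℂ}
    (hG : IsGenPerm G) {W : Matrix (Fin a) (Fin r) ℂ} {j : Fin r} (hj : j ∈ Colsupp W) :
    W.updateCol j 0 ≠ W * G := by
  intro h
  have := hG.ncard_colsupp_mul W
  rw [← h, colsupp_updateCol_zero] at this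
  exact (Set.ncard_sdiff_singleton_lt_of_mem hj).ne this

theorem SuppSub.updateCol_zero {a b : ℕ} {W : Matrix (Fin a) (Fin b) ℂ} {S : Set (Fin a × Fin b)}
    (hW : SuppSub W S) (j : Fin b) : SuppSub (W.updateCol j 0) S := by
  intro i k hik
  by_cases hkj : k = j
  · simp [hkj] at hik
  · exact hW i k (by rwa [Matrix.updateCol_ne hkj] at hik)

theorem updateCol_zero_mul_transpose {m n r : ℕ} (X : Matrix (Fin m) (Fin r) ℂ)
    {Y : Matrix (Fin n) (Fin r) ℂ} {j : Fin r} (hj : j ∉ Colsupp Y) :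
    X.updateCol j 0 * Yᵀ = X * Yᵀ := by
  simp only [Colsupp, Set.mem_ofPred_eq, not_exists, not_not] at hj
  ext a b
  simp only [Matrix.mul_apply, Matrix.transpose_apply]
  refine Finset.sum_congr rfl fun k _ => ?_
  by_cases hkj : k = j
  · simp [hkj, hj b]
  · rw [Matrix.updateCol_ne hkj]

theorem mul_transpose_updateCol_zero {m n r : ℕ} {X : Matrix (Fin m) (Fin r) ℂ}
    (Y : Matrix (Fin n) (Fin r) ℂ) {j : Fin r} (hj : j ∉ Colsupp X) :
    X * (Y.updateCol j 0)ᵀ = X * Yᵀ := by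
  rw [← Matrix.transpose_transpose (X * _), Matrix.transpose_mul, Matrix.transpose_transpose,
    updateCol_zero_mul_transpose Y hj, Matrix.transpose_mul, Matrix.transpose_transpose]

theorem stmt3 {m n r : ℕ} (Om : Set (Set (Fin m × Fin r) × Set (Fin n × Fin r)))
    (X : Matrix (Fin m) (Fin r) ℂ) (Y : Matrix (Fin n) (Fin r) ℂ)
    (h : (X, Y) ∈ PSUniqueSet (SigmaOm Om)) :
    Colsupp X = Colsupp Y := by
  obtain ⟨⟨S, hS, hXS, hYS⟩, huniq⟩ := h
  ext j
  constructor
  · intro hjX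
    by_contra hjY
    obtain ⟨G, hG, hX, -⟩ := huniq (X.updateCol j 0, Y) ⟨S, hS, hXS.updateCol_zero j, hYS⟩
      (updateCol_zero_mul_transpose X hjY)
    exact hG.updateCol_zero_ne_mul hjX hX
  · intro hjY
    by_contra hjX
    obtain ⟨G, hG, -, hY⟩ := huniq (X, Y.updateCol j 0) ⟨S, hS, hXS, hYS.updateCol_zero j⟩
      (mul_transpose_updateCol_zero Y hjX)
    exact hG.inv_transpose.updateCol_zero_ne_mul hjY hY
end

section
/- Let Ω be a family of pairs of supports that is stable by permutation, i.e., (S_L, S_R) ∈ Ω implies (S_L P, S_R P) ∈ Ω for every permutation matrix P. Let IC(Ω) be the set of pairs (X,Y) ∈ Σ_Ω with colsupp(X) = colsupp(Y), and MC(Ω) the set of pairs (X,Y) ∈ Σ_Ω such that for all (S_L,S_R) ∈ Ω with supp(X) ⊆ S_L and supp(Y) ⊆ S_R we have colsupp(X) = colsupp(S_L) and colsupp(Y) = colsupp(S_R). Then U(Σ_Ω) = U(IC(Ω)) ∩ MC(Ω), where U(·) denotes the set of pairs that are PS-unique factorizations in the given constraint set. -/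
open Matrix

/-- Permuting the columns of a support by the permutation `σ`. -/
def PermCols {a r : ℕ} (σ : Equiv.Perm (Fin r)) (S : Set (Fin a × Fin r)) :
    Set (Fin a × Fin r) :=
  (fun q => (q.1, σ q.2)) '' S

/-- The set IC(Ω) of pairs with identical column supports. -/
def ICset {m n r : ℕ} (Om : Set (Set (Fin m × Fin r) × Set (Fin n × Fin r))) :
    Set (Matrix (Fin m) (Fin r) ℂ × Matrix (Fin n) (Fin r) ℂ) :=
  {p ∈ SigmaOm Om | Colsupp p.1 = Colsupp p.2}

/-- The set MC(Ω) of pairs with maximal column supports. -/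
def MCset {m n r : ℕ} (Om : Set (Set (Fin m × Fin r) × Set (Fin n × Fin r))) :
    Set (Matrix (Fin m) (Fin r) ℂ × Matrix (Fin n) (Fin r) ℂ) :=
  {p ∈ SigmaOm Om | ∀ S ∈ Om, SuppSub p.1 S.1 → SuppSub p.2 S.2 →
    Colsupp p.1 = ColsuppS S.1 ∧ Colsupp p.2 = ColsuppS S.2}

section aux
open scoped Classical

variable {m n r : ℕ}

lemma mulGP_apply (X : Matrix (Fin m) (Fin r) ℂ) {G : Matrix (Fin r) (Fin r) ℂ}
    {σ : Equiv.Perm (Fin r)} {d : Fin r → ℂ}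
    (hG : ∀ i j, G i j = if i = σ j then d i else 0) (a : Fin m) (j : Fin r) :
    (X * G) a j = X a (σ j) * d (σ j) := by
  rw [Matrix.mul_apply, Finset.sum_eq_single (σ j)]
  · rw [hG]; simp
  · intro k _ hk; rw [hG]; simp [hk]
  · simp

lemma mem_colsupp_mulGP (X : Matrix (Fin m) (Fin r) ℂ) {G : Matrix (Fin r) (Fin r) ℂ}
    {σ : Equiv.Perm (Fin r)} {d : Fin r → ℂ} (hd : ∀ i, d i ≠ 0)
    (hG : ∀ i j, G i j = if i = σ j then d i else 0) (j : Fin r) :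
    j ∈ Colsupp (X * G) ↔ σ j ∈ Colsupp X := by
  unfold Colsupp
  simp only [Set.mem_setOf_eq, mulGP_apply X hG]
  constructor
  · rintro ⟨a, ha⟩; exact ⟨a, fun h => ha (by rw [h]; ring)⟩
  · rintro ⟨a, ha⟩; exact ⟨a, mul_ne_zero ha (hd _)⟩

lemma ncard_colsupp_mulGP (X : Matrix (Fin m) (Fin r) ℂ) {G : Matrix (Fin r) (Fin r) ℂ}
    {σ : Equiv.Perm (Fin r)} {d : Fin r → ℂ} (hd : ∀ i, d i ≠ 0)
    (hG : ∀ i j, G i j = if i = σ j then d i else 0) :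
    (Colsupp (X * G)).ncard = (Colsupp X).ncard := by
  have h1 : Colsupp (X * G) = ⇑σ ⁻¹' (Colsupp X) :=
    Set.ext fun j => mem_colsupp_mulGP X hd hG j
  have h2 : ⇑σ ⁻¹' (Colsupp X) = ⇑σ.symm '' (Colsupp X) := by
    ext j
    constructor
    · intro h; exact ⟨σ j, h, by simp⟩
    · rintro ⟨x, hx, rfl⟩; simpa using hx
  rw [h1, h2, Set.ncard_image_of_injective _ σ.symm.injective]

lemma genPerm_invT {G : Matrix (Fin r) (Fin r) ℂ}
    {σ : Equiv.Perm (Fin r)} {d : Fin r → ℂ} (hd : ∀ i, d i ≠ 0)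
    (hG : ∀ i j, G i j = if i = σ j then d i else 0) :
    ∀ i j, (G⁻¹)ᵀ i j = if i = σ j then (d i)⁻¹ else 0 := by
  have hGH : G * (Matrix.of fun i j => if σ i = j then (d j)⁻¹ else 0) = 1 := by
    ext i k
    rw [Matrix.mul_apply, Finset.sum_eq_single (σ.symm i)]
    · rw [hG, Matrix.of_apply]
      by_cases h : i = k <;>
        simp [h, Matrix.one_apply, mul_inv_cancel₀ (hd k)]
    · intro j _ hj
      rw [hG]
      have : i ≠ σ j := fun h => hj (by simp [h])
      simp [this]
    · simp
  have hinv : G⁻¹ = Matrix.of fun i j => if σ i = j then (d j)⁻¹ else 0 :=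
    Matrix.inv_eq_right_inv hGH
  intro i j
  rw [Matrix.transpose_apply, hinv, Matrix.of_apply]
  by_cases h : i = σ j <;> simp [h, eq_comm]

lemma mem_PermCols {a : ℕ} (σ : Equiv.Perm (Fin r)) (T : Set (Fin a × Fin r))
    (i : Fin a) (k : Fin r) : (i, k) ∈ PermCols σ T ↔ (i, σ.symm k) ∈ T := by
  constructor
  · rintro ⟨⟨x, y⟩, hxy, h⟩
    obtain ⟨rfl, rfl⟩ : x = i ∧ σ y = k := by simpa using h
    simpa using hxy
  · intro h; exact ⟨(i, σ.symm k), h, by simp⟩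

lemma psequiv_ncard {p q : Matrix (Fin m) (Fin r) ℂ × Matrix (Fin n) (Fin r) ℂ}
    (h : PSEquiv p q) :
    (Colsupp q.1).ncard = (Colsupp p.1).ncard ∧
    (Colsupp q.2).ncard = (Colsupp p.2).ncard := by
  obtain ⟨G, ⟨σ, d, hd, hG⟩, h1, h2⟩ := h
  refine ⟨?_, ?_⟩
  · rw [h1]; exact ncard_colsupp_mulGP _ hd hG
  · rw [h2]
    exact ncard_colsupp_mulGP _ (fun i => inv_ne_zero (hd i)) (genPerm_invT hd hG)

lemma prod_congr {X X' : Matrix (Fin m) (Fin r) ℂ} {Y Y' : Matrix (Fin n) (Fin r) ℂ}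
    (h : ∀ a b k, X' a k * Y' b k = X a k * Y b k) : X' * Y'ᵀ = X * Yᵀ := by
  ext a b
  simp only [Matrix.mul_apply, Matrix.transpose_apply]
  exact Finset.sum_congr rfl fun k _ => h a b k

lemma ssubset_ncard_ne {s t : Set (Fin r)} (hsub : s ⊆ t) (j : Fin r)
    (hjt : j ∈ t) (hjs : j ∉ s) : s.ncard ≠ t.ncard := by
  have : s ⊂ t := by
    rw [Set.ssubset_def]
    exact ⟨hsub, fun h => hjs (h hjt)⟩
  exact (Set.ncard_lt_ncard this (Set.toFinite _)).ne

end aux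

open scoped Classical

theorem stmt5 {m n r : ℕ} (Om : Set (Set (Fin m × Fin r) × Set (Fin n × Fin r)))
    (hstable : ∀ S ∈ Om, ∀ σ : Equiv.Perm (Fin r),
      (PermCols σ S.1, PermCols σ S.2) ∈ Om) :
    PSUniqueSet (SigmaOm Om) = PSUniqueSet (ICset Om) ∩ MCset Om := by
  ext p
  constructor
  · rintro ⟨hpSg, hpu⟩
    obtain ⟨S₀, hS₀, hsX₀, hsY₀⟩ := hpSg
    -- Step 1: p ∈ IC.
    have key1 : ∀ j, j ∈ Colsupp p.1 → j ∈ Colsupp p.2 := by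
      intro j hjX
      by_contra hjY
      have hYj : ∀ b, p.2 b j = 0 := fun b => by
        by_contra h; exact hjY ⟨b, h⟩
      set X' : Matrix (Fin m) (Fin r) ℂ := fun a k => if k = j then 0 else p.1 a k with hX'
      have hq : ((X', p.2) : Matrix (Fin m) (Fin r) ℂ × Matrix (Fin n) (Fin r) ℂ)
          ∈ SigmaOm Om := by
        refine ⟨S₀, hS₀, ?_, hsY₀⟩
        intro a k hak
        by_cases hk : k = j
        · exact absurd (by simp [hX', hk]) hak
        · exact hsX₀ a k (by simpa [hX', hk] using hak)
      have hprod : X' * p.2ᵀ = p.1 * p.2ᵀ := by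
        apply prod_congr
        intro a b k
        by_cases hk : k = j
        · subst hk; simp [hYj]
        · simp [hX', hk]
      have hps := hpu (X', p.2) hq hprod
      have hn := (psequiv_ncard hps).1
      refine ssubset_ncard_ne ?_ j hjX ?_ hn
      · rintro k ⟨a, ha⟩
        by_cases hk : k = j
        · exact absurd (by simp [hX', hk]) ha
        · exact ⟨a, by simpa [hX', hk] using ha⟩
      · rintro ⟨a, ha⟩; exact ha (by simp [hX'])
    have key2 : ∀ j, j ∈ Colsupp p.2 → j ∈ Colsupp p.1 := by
      intro j hjY
      by_contra hjX
      have hXj : ∀ a, p.1 a j = 0 := fun a => by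
        by_contra h; exact hjX ⟨a, h⟩
      set Y' : Matrix (Fin n) (Fin r) ℂ := fun b k => if k = j then 0 else p.2 b k with hY'
      have hq : ((p.1, Y') : Matrix (Fin m) (Fin r) ℂ × Matrix (Fin n) (Fin r) ℂ)
          ∈ SigmaOm Om := by
        refine ⟨S₀, hS₀, hsX₀, ?_⟩
        intro b k hbk
        by_cases hk : k = j
        · exact absurd (by simp [hY', hk]) hbk
        · exact hsY₀ b k (by simpa [hY', hk] using hbk)
      have hprod : p.1 * Y'ᵀ = p.1 * p.2ᵀ := by
        apply prod_congr
        intro a b k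
        by_cases hk : k = j
        · subst hk; simp [hXj]
        · simp [hY', hk]
      have hps := hpu (p.1, Y') hq hprod
      have hn := (psequiv_ncard hps).2
      refine ssubset_ncard_ne ?_ j hjY ?_ hn
      · rintro k ⟨b, hb⟩
        by_cases hk : k = j
        · exact absurd (by simp [hY', hk]) hb
        · exact ⟨b, by simpa [hY', hk] using hb⟩
      · rintro ⟨b, hb⟩; exact hb (by simp [hY'])
    have hIC : Colsupp p.1 = Colsupp p.2 := Set.ext fun j => ⟨key1 j, key2 j⟩
    have hpSg' : p ∈ SigmaOm Om := ⟨S₀, hS₀, hsX₀, hsY₀⟩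
    refine ⟨⟨⟨hpSg', hIC⟩, fun q hq hprod => hpu q hq.1 hprod⟩, hpSg', ?_⟩
    -- Step 2: p ∈ MC.
    intro S hS hsX hsY
    constructor
    · apply Set.Subset.antisymm
      · rintro j ⟨i, hi⟩; exact ⟨i, hsX i j hi⟩
      · rintro j ⟨i, hij⟩
        by_contra hjX
        have hXj : ∀ a, p.1 a j = 0 := fun a => by
          by_contra h; exact hjX ⟨a, h⟩
        have hjY : j ∉ Colsupp p.2 := hIC ▸ hjX
        have hYj : ∀ b, p.2 b j = 0 := fun b => by
          by_contra h; exact hjY ⟨b, h⟩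
        set X' : Matrix (Fin m) (Fin r) ℂ :=
          fun a k => if a = i ∧ k = j then 1 else p.1 a k with hX'
        have hq : ((X', p.2) : Matrix (Fin m) (Fin r) ℂ × Matrix (Fin n) (Fin r) ℂ)
            ∈ SigmaOm Om := by
          refine ⟨S, hS, ?_, hsY⟩
          intro a k hak
          by_cases hak' : a = i ∧ k = j
          · obtain ⟨rfl, rfl⟩ := hak'; exact hij
          · exact hsX a k (by simpa [hX', hak'] using hak)
        have hprod : X' * p.2ᵀ = p.1 * p.2ᵀ := by
          apply prod_congr
          intro a b k
          by_cases hk : k = j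
          · subst hk; simp [hYj]
          · simp [hX', hk]
        have hps := hpu (X', p.2) hq hprod
        have hn := (psequiv_ncard hps).1
        refine (ssubset_ncard_ne ?_ j ?_ hjX) hn.symm
        · rintro k ⟨a, ha⟩
          refine ⟨a, ?_⟩
          by_cases hak' : a = i ∧ k = j
          · exact absurd (hak'.2 ▸ hXj a) ha
          · simpa [hX', hak'] using ha
        · exact ⟨i, by simp [hX']⟩
    · apply Set.Subset.antisymm
      · rintro j ⟨b, hb⟩; exact ⟨b, hsY b j hb⟩
      · rintro j ⟨i, hij⟩
        by_contra hjY
        have hYj : ∀ b, p.2 b j = 0 := fun b => by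
          by_contra h; exact hjY ⟨b, h⟩
        have hjX : j ∉ Colsupp p.1 := hIC ▸ hjY
        have hXj : ∀ a, p.1 a j = 0 := fun a => by
          by_contra h; exact hjX ⟨a, h⟩
        set Y' : Matrix (Fin n) (Fin r) ℂ :=
          fun b k => if b = i ∧ k = j then 1 else p.2 b k with hY'
        have hq : ((p.1, Y') : Matrix (Fin m) (Fin r) ℂ × Matrix (Fin n) (Fin r) ℂ)
            ∈ SigmaOm Om := by
          refine ⟨S, hS, hsX, ?_⟩
          intro b k hbk
          by_cases hbk' : b = i ∧ k = j
          · obtain ⟨rfl, rfl⟩ := hbk'; exact hij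
          · exact hsY b k (by simpa [hY', hbk'] using hbk)
        have hprod : p.1 * Y'ᵀ = p.1 * p.2ᵀ := by
          apply prod_congr
          intro a b k
          by_cases hk : k = j
          · subst hk; simp [hXj]
          · simp [hY', hk]
        have hps := hpu (p.1, Y') hq hprod
        have hn := (psequiv_ncard hps).2
        refine (ssubset_ncard_ne ?_ j ?_ hjY) hn.symm
        · rintro k ⟨b, hb⟩
          refine ⟨b, ?_⟩
          by_cases hbk' : b = i ∧ k = j
          · exact absurd (hbk'.2 ▸ hYj b) hb
          · simpa [hY', hbk'] using hb
        · exact ⟨i, by simp [hY']⟩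
  · rintro ⟨⟨⟨hpSg, hICcs⟩, hpu⟩, _, hpMC⟩
    refine ⟨hpSg, ?_⟩
    rintro q hqSg hprod
    obtain ⟨S, hS, hsX', hsY'⟩ := hqSg
    set X'' : Matrix (Fin m) (Fin r) ℂ :=
      fun a k => if (∀ i, q.2 i k = 0) then 0 else q.1 a k with hX''
    set Y'' : Matrix (Fin n) (Fin r) ℂ :=
      fun b k => if (∀ i, q.1 i k = 0) then 0 else q.2 b k with hY''
    have hXcap : ∀ j, j ∈ Colsupp X'' ↔ j ∈ Colsupp q.1 ∧ j ∈ Colsupp q.2 := by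
      intro j
      constructor
      · rintro ⟨a, ha⟩
        by_cases hc : ∀ i, q.2 i j = 0
        · exact absurd (by simp [hX'', hc]) ha
        · push_neg at hc
          exact ⟨⟨a, by simpa [hX'', hc] using ha⟩, hc⟩
      · rintro ⟨⟨a, ha⟩, ⟨b, hb⟩⟩
        have hc : ¬ (∀ i, q.2 i j = 0) := fun h => hb (h b)
        exact ⟨a, by simpa [hX'', hc] using ha⟩
    have hYcap : ∀ j, j ∈ Colsupp Y'' ↔ j ∈ Colsupp q.1 ∧ j ∈ Colsupp q.2 := by
      intro j
      constructor
      · rintro ⟨b, hb⟩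
        by_cases hc : ∀ i, q.1 i j = 0
        · exact absurd (by simp [hY'', hc]) hb
        · push_neg at hc
          exact ⟨hc, ⟨b, by simpa [hY'', hc] using hb⟩⟩
      · rintro ⟨⟨a, ha⟩, ⟨b, hb⟩⟩
        have hc : ¬ (∀ i, q.1 i j = 0) := fun h => ha (h a)
        exact ⟨b, by simpa [hY'', hc] using hb⟩
    have hq''Sg : ((X'', Y'') : Matrix (Fin m) (Fin r) ℂ × Matrix (Fin n) (Fin r) ℂ)
        ∈ SigmaOm Om := by
      refine ⟨S, hS, ?_, ?_⟩
      · intro a k hak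
        by_cases hc : ∀ i, q.2 i k = 0
        · exact absurd (by simp [hX'', hc]) hak
        · exact hsX' a k (by simpa [hX'', hc] using hak)
      · intro b k hbk
        by_cases hc : ∀ i, q.1 i k = 0
        · exact absurd (by simp [hY'', hc]) hbk
        · exact hsY' b k (by simpa [hY'', hc] using hbk)
    have hq''IC : ((X'', Y'') : Matrix (Fin m) (Fin r) ℂ × Matrix (Fin n) (Fin r) ℂ)
        ∈ ICset Om :=
      ⟨hq''Sg, Set.ext fun j => (hXcap j).trans (hYcap j).symm⟩
    have hprod'' : X'' * Y''ᵀ = p.1 * p.2ᵀ := by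
      rw [← hprod]
      apply prod_congr
      intro a b k
      by_cases hcY : ∀ i, q.2 i k = 0
      · simp [hX'', hcY]
      · by_cases hcX : ∀ i, q.1 i k = 0
        · simp [hY'', hX'', hcX, hcY]
        · simp [hX'', hY'', hcX, hcY]
    have hps := hpu (X'', Y'') hq''IC hprod''
    obtain ⟨G, ⟨σ, d, hd, hG⟩, h1, h2⟩ := hps
    have hinvT := genPerm_invT hd hG
    have eX : ∀ a j, X'' a j = p.1 a (σ j) * d (σ j) := by
      intro a j
      rw [show X'' = p.1 * G from h1, mulGP_apply p.1 hG]
    have eY : ∀ b j, Y'' b j = p.2 b (σ j) * (d (σ j))⁻¹ := by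
      intro b j
      rw [show Y'' = p.2 * (G⁻¹)ᵀ from h2, mulGP_apply p.2 hinvT]
    -- support of p lies in permuted supports
    have hsXp : SuppSub p.1 (PermCols σ S.1) := by
      intro a k hak
      have h1' : X'' a (σ.symm k) ≠ 0 := by
        rw [eX a (σ.symm k)]
        simp only [Equiv.apply_symm_apply]
        exact mul_ne_zero hak (hd k)
      have hq1 : q.1 a (σ.symm k) ≠ 0 := by
        by_cases hc : ∀ i, q.2 i (σ.symm k) = 0
        · exact absurd (by simp [hX'', hc]) h1'
        · simpa [hX'', hc] using h1'
      exact (mem_PermCols σ S.1 a k).2 (hsX' a (σ.symm k) hq1)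
    have hsYp : SuppSub p.2 (PermCols σ S.2) := by
      intro b k hbk
      have h2' : Y'' b (σ.symm k) ≠ 0 := by
        rw [eY b (σ.symm k)]
        simp only [Equiv.apply_symm_apply]
        exact mul_ne_zero hbk (inv_ne_zero (hd k))
      have hq2 : q.2 b (σ.symm k) ≠ 0 := by
        by_cases hc : ∀ i, q.1 i (σ.symm k) = 0
        · exact absurd (by simp [hY'', hc]) h2'
        · simpa [hY'', hc] using h2'
      exact (mem_PermCols σ S.2 b k).2 (hsY' b (σ.symm k) hq2)
    obtain ⟨hmx, hmy⟩ := hpMC (PermCols σ S.1, PermCols σ S.2) (hstable S hS σ) hsXp hsYp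
    -- Colsupp X'' = ColsuppS S.1
    have hX''S : Colsupp X'' = ColsuppS S.1 := by
      ext j
      have hXm : j ∈ Colsupp X'' ↔ σ j ∈ Colsupp p.1 := by
        constructor
        · rintro ⟨a, ha⟩
          rw [eX a j] at ha
          exact ⟨a, fun h => ha (by rw [h]; ring)⟩
        · rintro ⟨a, ha⟩
          exact ⟨a, by rw [eX a j]; exact mul_ne_zero ha (hd _)⟩
      rw [hXm]
      have : σ j ∈ Colsupp p.1 ↔ σ j ∈ ColsuppS (PermCols σ S.1) := by rw [hmx]
      rw [this]
      constructor
      · rintro ⟨i, hi⟩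
        have := (mem_PermCols σ S.1 i (σ j)).1 hi
        exact ⟨i, by simpa using this⟩
      · rintro ⟨i, hi⟩
        exact ⟨i, (mem_PermCols σ S.1 i (σ j)).2 (by simpa using hi)⟩
    have hY''S : Colsupp Y'' = ColsuppS S.2 := by
      ext j
      have hYm : j ∈ Colsupp Y'' ↔ σ j ∈ Colsupp p.2 := by
        constructor
        · rintro ⟨b, hb⟩
          rw [eY b j] at hb
          exact ⟨b, fun h => hb (by rw [h]; ring)⟩
        · rintro ⟨b, hb⟩
          exact ⟨b, by rw [eY b j]; exact mul_ne_zero hb (inv_ne_zero (hd _))⟩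
      rw [hYm]
      have : σ j ∈ Colsupp p.2 ↔ σ j ∈ ColsuppS (PermCols σ S.2) := by rw [hmy]
      rw [this]
      constructor
      · rintro ⟨i, hi⟩
        have := (mem_PermCols σ S.2 i (σ j)).1 hi
        exact ⟨i, by simpa using this⟩
      · rintro ⟨i, hi⟩
        exact ⟨i, (mem_PermCols σ S.2 i (σ j)).2 (by simpa using hi)⟩
    -- Colsupp q.1 = Colsupp q.2
    have hq1sub : Colsupp q.1 ⊆ ColsuppS S.1 := by
      rintro j ⟨a, ha⟩; exact ⟨a, hsX' a j ha⟩
    have hq2sub : Colsupp q.2 ⊆ ColsuppS S.2 := by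
      rintro j ⟨b, hb⟩; exact ⟨b, hsY' b j hb⟩
    have hsub12 : Colsupp q.1 ⊆ Colsupp q.2 := by
      intro k hk
      have : k ∈ Colsupp X'' := hX''S ▸ hq1sub hk
      exact ((hXcap k).1 this).2
    have hsub21 : Colsupp q.2 ⊆ Colsupp q.1 := by
      intro k hk
      have : k ∈ Colsupp Y'' := hY''S ▸ hq2sub hk
      exact ((hYcap k).1 this).1
    have hXeq : X'' = q.1 := by
      funext a k
      by_cases hc : ∀ i, q.2 i k = 0
      · have hk2 : k ∉ Colsupp q.2 := fun ⟨i, hi⟩ => hi (hc i)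
        have hk1 : k ∉ Colsupp q.1 := fun h => hk2 (hsub12 h)
        have : q.1 a k = 0 := by by_contra h; exact hk1 ⟨a, h⟩
        simp [hX'', hc, this]
      · simp [hX'', hc]
    have hYeq : Y'' = q.2 := by
      funext b k
      by_cases hc : ∀ i, q.1 i k = 0
      · have hk1 : k ∉ Colsupp q.1 := fun ⟨i, hi⟩ => hi (hc i)
        have hk2 : k ∉ Colsupp q.2 := fun h => hk1 (hsub21 h)
        have : q.2 b k = 0 := by by_contra h; exact hk2 ⟨b, h⟩
        simp [hY'', hc, this]
      · simp [hY'', hc]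
    exact ⟨G, ⟨σ, d, hd, hG⟩, by rw [← hXeq]; exact h1, by rw [← hYeq]; exact h2⟩
end

section
/- Let A be an m×N matrix, θ a family of subsets of {1,…,N} (allowed supports), and Σ_θ the union over s ∈ θ of {x ∈ ℂ^N : supp(x) ⊆ s}. Let x* ∈ Σ_θ. Then x* is the unique solution in Σ_θ of the equation Ax = Ax* if and only if both: (i) for every s ∈ θ with supp(x*) ⊆ s, the columns of A indexed by s are linearly independent; and (ii) for every s ∈ θ such that Ax* lies in the span of the columns of A indexed by s, supp(x*) ⊆ s. -/
open Matrix

private lemma mulVec_supported {m N : ℕ} (A : Matrix (Fin m) (Fin N) ℂ)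
    (s : Set (Fin N)) [Fintype s] (x : Fin N → ℂ) (hx : ∀ j, j ∉ s → x j = 0) :
    A.mulVec x = ∑ j : s, x j.1 • (fun i => A i j.1) := by
  classical
  have h1 : A.mulVec x = ∑ j : Fin N, x j • (fun i => A i j) := by
    funext i
    simp [Matrix.mulVec, dotProduct, Finset.sum_apply, mul_comm]
  rw [h1, Finset.sum_set_coe (f := fun j => x j • (fun i => A i j)) s]
  refine (Finset.sum_subset (Set.toFinset_subset.mpr (fun a _ => Finset.mem_univ a)) ?_).symm
  intro j _ hj
  have : j ∉ s := by simpa using hj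
  simp [hx j this]

theorem stmt8 {m N : ℕ} (A : Matrix (Fin m) (Fin N) ℂ)
    (θ : Set (Set (Fin N))) (xstar : Fin N → ℂ)
    (hx : ∃ s ∈ θ, {j | xstar j ≠ 0} ⊆ s) :
    (∀ x : Fin N → ℂ, (∃ s ∈ θ, {j | x j ≠ 0} ⊆ s) →
        A.mulVec x = A.mulVec xstar → x = xstar) ↔
      ((∀ s ∈ θ, {j | xstar j ≠ 0} ⊆ s →
          LinearIndependent ℂ (fun j : s => fun i => A i j.1)) ∧
        (∀ s ∈ θ,
          A.mulVec xstar ∈ Submodule.span ℂ (Set.range (fun j : s => fun i => A i j.1)) →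
            {j | xstar j ≠ 0} ⊆ s)) := by
  classical
  constructor
  · intro huniq
    constructor
    · -- linear independence
      intro s hs hsupp
      rw [Fintype.linearIndependent_iff]
      intro g hg
      set y : Fin N → ℂ := fun j => if h : j ∈ s then g ⟨j, h⟩ else 0 with hydef
      have hy0 : ∀ j, j ∉ s → y j = 0 := by
        intro j hj; simp [hydef, hj]
      set x : Fin N → ℂ := fun j => xstar j + y j with hxdef
      have hsup : {j | x j ≠ 0} ⊆ s := by
        intro j hj
        by_contra hjs
        apply hj
        have h1 : xstar j = 0 := by
          by_contra h; exact hjs (hsupp h)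
        simp [hxdef, h1, hy0 j hjs]
      have hAy : A.mulVec y = 0 := by
        rw [mulVec_supported A s y hy0]
        have : ∀ j : s, y j.1 • (fun i => A i j.1) = g j • (fun i => A i j.1) := by
          intro j; simp [hydef, j.2]
        rw [Finset.sum_congr rfl (fun j _ => this j), hg]
      have hAx : A.mulVec x = A.mulVec xstar := by
        have hxy : x = xstar + y := rfl
        rw [hxy, Matrix.mulVec_add, hAy, add_zero]
      have hxeq := huniq x ⟨s, hs, hsup⟩ hAx
      intro j
      have : x j.1 = xstar j.1 := by rw [hxeq]
      have hyj : y j.1 = 0 := by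
        have := this
        simp [hxdef] at this
        linear_combination this
      simpa [hydef, j.2] using hyj
    · -- support condition
      intro s hs hmem
      obtain ⟨c, hc⟩ := (Submodule.mem_span_range_iff_exists_fun ℂ).mp hmem
      set x : Fin N → ℂ := fun j => if h : j ∈ s then c ⟨j, h⟩ else 0 with hxdef
      have hx0 : ∀ j, j ∉ s → x j = 0 := by intro j hj; simp [hxdef, hj]
      have hsup : {j | x j ≠ 0} ⊆ s := by
        intro j hj
        by_contra hjs
        exact hj (hx0 j hjs)
      have hAx : A.mulVec x = A.mulVec xstar := by
        rw [mulVec_supported A s x hx0]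
        have : ∀ j : s, x j.1 • (fun i => A i j.1) = c j • (fun i => A i j.1) := by
          intro j; simp [hxdef, j.2]
        rw [Finset.sum_congr rfl (fun j _ => this j), hc]
      have hxeq := huniq x ⟨s, hs, hsup⟩ hAx
      rw [← hxeq]
      exact hsup
  · rintro ⟨hind, hspan⟩ x ⟨s, hs, hxs⟩ hAx
    have hx0 : ∀ j, j ∉ s → x j = 0 := by
      intro j hj
      by_contra h
      exact hj (hxs h)
    have hmem : A.mulVec xstar ∈
        Submodule.span ℂ (Set.range (fun j : s => fun i => A i j.1)) := by
      rw [← hAx, mulVec_supported A s x hx0]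
      exact Submodule.sum_mem _ (fun j _ =>
        Submodule.smul_mem _ _ (Submodule.subset_span ⟨j, rfl⟩))
    have hxstars := hspan s hs hmem
    have hind' := (Fintype.linearIndependent_iff).mp (hind s hs hxstars)
    have hd0 : ∀ j, j ∉ s → (x - xstar) j = 0 := by
      intro j hj
      have h1 : xstar j = 0 := by
        by_contra h; exact hj (hxstars h)
      simp [hx0 j hj, h1]
    have hsum : ∑ j : s, (x - xstar) j.1 • (fun i => A i j.1) = 0 := by
      rw [← mulVec_supported A s (x - xstar) hd0, Matrix.mulVec_sub, hAx, sub_self]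
    have hz := hind' (fun j => (x - xstar) j.1) hsum
    funext j
    by_cases hj : j ∈ s
    · have := hz ⟨j, hj⟩
      simp at this
      linear_combination this
    · rw [hx0 j hj]
      by_contra h
      exact hj (hxstars (by simpa using (Ne.symm h)))
end

section
/- Let X be an m×r matrix, Θ a family of n×r binary supports, and Y ∈ Σ_Θ. Then the uniqueness property (for all Y' ∈ Σ_Θ, XYᵀ = XY'ᵀ implies Y = Y') holds if and only if both: (i) for each S ∈ Θ with supp(Y) ⊆ S and each row index j ∈ {1,…,n}, the columns of X indexed by the support of the j-th row of S are linearly independent; and (ii) for each S ∈ Θ such that for all j the j-th column of XYᵀ is a linear combination of the columns of X indexed by the support of the j-th row of S, we have supp(Y) ⊆ S. -/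
open Matrix

def SigmaTh {n r : ℕ} (Th : Set (Set (Fin n × Fin r))) :
    Set (Matrix (Fin n) (Fin r) ℂ) :=
  {Y | ∃ S ∈ Th, SuppSub Y S}

/-- The `j`-th column of `X * Yᵀ` as a linear combination of columns of `X`. -/
private lemma colsum {m n r : ℕ} (X : Matrix (Fin m) (Fin r) ℂ)
    (Y : Matrix (Fin n) (Fin r) ℂ) (j : Fin n) :
    (fun i => (X * Yᵀ) i j) = ∑ l : Fin r, Y j l • (fun i => X i l) := by
  funext i
  simp [Matrix.mul_apply, Finset.sum_apply, mul_comm]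

/-- Restrict a linear-combination sum to a subtype that contains the support of the
coefficients. -/
private lemma subsum {m r : ℕ} (p : Fin r → Prop) [DecidablePred p]
    (c : Fin r → ℂ) (v : Fin r → (Fin m → ℂ))
    (hc : ∀ l, c l ≠ 0 → p l) :
    ∑ l : Fin r, c l • v l = ∑ l : {l // p l}, c l.1 • v l.1 := by
  rw [← Finset.sum_filter_of_ne (s := Finset.univ)
      (fun l _ h => hc l fun h0 => h (by simp [h0]))]
  exact Finset.sum_subtype _ (by simp) _

private lemma ditesum {m r : ℕ} (p : Fin r → Prop) [DecidablePred p]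
    (g : {l // p l} → ℂ) (v : Fin r → (Fin m → ℂ)) :
    ∑ l : Fin r, (if h : p l then g ⟨l, h⟩ else 0) • v l
      = ∑ l : {l // p l}, g l • v l.1 := by
  rw [subsum p _ v (fun l h => by by_contra hp; simp [hp] at h)]
  refine Finset.sum_congr rfl fun l _ => ?_
  simp [l.2]

theorem stmt9 {m n r : ℕ} (X : Matrix (Fin m) (Fin r) ℂ)
    (Th : Set (Set (Fin n × Fin r))) (Y : Matrix (Fin n) (Fin r) ℂ)
    (hY : Y ∈ SigmaTh Th) :
    (∀ Y' ∈ SigmaTh Th, X * Yᵀ = X * Y'ᵀ → Y = Y') ↔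
      ((∀ S ∈ Th, SuppSub Y S → ∀ j : Fin n,
          LinearIndependent ℂ
            (fun l : {l : Fin r // (j, l) ∈ S} => fun i => X i l.1)) ∧
        (∀ S ∈ Th,
          (∀ j : Fin n, (fun i => (X * Yᵀ) i j) ∈
            Submodule.span ℂ
              (Set.range (fun l : {l : Fin r // (j, l) ∈ S} => fun i => X i l.1))) →
          SuppSub Y S)) := by
  classical
  constructor
  · intro hU
    constructor
    · -- (i) linear independence
      intro S hS hYS j
      by_contra hLI
      rw [Fintype.not_linearIndependent_iff] at hLI
      obtain ⟨g, hg0, l₀, hl₀⟩ := hLI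
      set Y' : Matrix (Fin n) (Fin r) ℂ :=
        Matrix.of fun j' l =>
          Y j' l + (if j' = j then (if h : (j, l) ∈ S then g ⟨l, h⟩ else 0) else 0) with hY'def
      have hsub' : SuppSub Y' S := by
        intro j' l hne
        by_cases hj : j' = j
        · subst hj
          by_cases hl : (j', l) ∈ S
          · exact hl
          · exact hYS j' l (by simpa [hY'def, hl] using hne)
        · apply hYS j' l
          simpa [hY'def, hj] using hne
      have hkey : X * Y'ᵀ = X * Yᵀ := by
        ext i j'
        have : (fun i => (X * Y'ᵀ) i j') = (fun i => (X * Yᵀ) i j') := by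
          rw [colsum, colsum]
          by_cases hj : j' = j
          · subst hj
            have step : ∀ l : Fin r, Y' j' l • (fun i => X i l)
                = Y j' l • (fun i => X i l)
                  + (if h : (j', l) ∈ S then g ⟨l, h⟩ else 0) • (fun i => X i l) := by
              intro l
              rw [← add_smul]
              simp [hY'def]
            rw [Finset.sum_congr rfl (fun l _ => step l), Finset.sum_add_distrib,
              ditesum, hg0, add_zero]
          · refine Finset.sum_congr rfl fun l _ => ?_
            simp [hY'def, hj]
        exact congrFun this i
      have hEq : Y = Y' := hU Y' ⟨S, hS, hsub'⟩ hkey.symm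
      have hcc := congrFun (congrFun hEq j) l₀.1
      apply hl₀
      simp [hY'def, l₀.2] at hcc
      exact hcc
    · -- (ii) completeness of support
      intro S hS hsp
      have hex : ∀ j : Fin n, ∃ c : {l : Fin r // (j, l) ∈ S} → ℂ,
          ∑ l, c l • (fun i => X i l.1) = fun i => (X * Yᵀ) i j := by
        intro j
        exact (Submodule.mem_span_range_iff_exists_fun ℂ).mp (hsp j)
      choose c hc using hex
      set Y' : Matrix (Fin n) (Fin r) ℂ :=
        Matrix.of fun j l => if h : (j, l) ∈ S then c j ⟨l, h⟩ else 0 with hY'def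
      have hsub' : SuppSub Y' S := by
        intro j l hne
        by_contra hl
        apply hne
        simp [hY'def, hl]
      have hkey : X * Yᵀ = X * Y'ᵀ := by
        ext i j
        have : (fun i => (X * Y'ᵀ) i j) = (fun i => (X * Yᵀ) i j) := by
          rw [colsum]
          have : ∑ l : Fin r, Y' j l • (fun i => X i l)
              = ∑ l : {l : Fin r // (j, l) ∈ S}, c j l • (fun i => X i l.1) := by
            simpa [hY'def] using ditesum (fun l => (j, l) ∈ S) (c j) (fun l i => X i l)
          rw [this, hc j]
        exact (congrFun this i).symm
      have hEq : Y = Y' := hU Y' ⟨S, hS, hsub'⟩ hkey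
      rw [hEq]
      exact hsub'
  · -- converse
    rintro ⟨h1, h2⟩ Y' ⟨S, hS, hsub'⟩ heq
    have hsp : ∀ j : Fin n, (fun i => (X * Yᵀ) i j) ∈
        Submodule.span ℂ
          (Set.range (fun l : {l : Fin r // (j, l) ∈ S} => fun i => X i l.1)) := by
      intro j
      refine (Submodule.mem_span_range_iff_exists_fun ℂ).mpr ⟨fun l => Y' j l.1, ?_⟩
      rw [heq, colsum]
      simpa using (subsum (fun l => (j, l) ∈ S) (Y' j) (fun l i => X i l)
        (fun l h => hsub' j l h)).symm
    have hYS : SuppSub Y S := h2 S hS hsp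
    have hLI := h1 S hS hYS
    funext j l
    have hdiff : ∑ l : {l : Fin r // (j, l) ∈ S},
        (Y j l.1 - Y' j l.1) • (fun i => X i l.1) = 0 := by
      have e1 : ∑ l : {l : Fin r // (j, l) ∈ S}, Y j l.1 • (fun i => X i l.1)
          = fun i => (X * Yᵀ) i j := by
        rw [colsum]; exact (subsum (fun l => (j, l) ∈ S) (Y j) (fun l i => X i l) (fun l h => hYS j l h)).symm
      have e2 : ∑ l : {l : Fin r // (j, l) ∈ S}, Y' j l.1 • (fun i => X i l.1)
          = fun i => (X * Y'ᵀ) i j := by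
        rw [colsum]; exact (subsum (fun l => (j, l) ∈ S) (Y' j) (fun l i => X i l) (fun l h => hsub' j l h)).symm
      simp only [sub_smul, Finset.sum_sub_distrib, e1, e2, heq, sub_self]
    have hz := Fintype.linearIndependent_iff.mp (hLI j) (fun l => Y j l.1 - Y' j l.1) hdiff
    by_cases hl : (j, l) ∈ S
    · have := hz ⟨l, hl⟩
      exact sub_eq_zero.mp this
    · have hy : Y j l = 0 := by by_contra h; exact hl (hYS j l h)
      have hy' : Y' j l = 0 := by by_contra h; exact hl (hsub' j l h)
      rw [hy, hy']
end

section
/- Let Ω be a family of pairs of supports and let IC(Ω) be the set of pairs (X,Y) ∈ Σ_Ω with colsupp(X) = colsupp(Y). The map φ(X,Y) = (X_i Y_iᵀ)_{i=1}^r restricted to IC(Ω) is injective up to equivalences: if (X,Y), (X',Y') ∈ IC(Ω) and φ(X,Y) equals φ(X',Y') up to a permutation of indices, then (X,Y) ∼ (X',Y'), i.e., there exists a generalized permutation matrix G with X' = XG and Y' = Y(G⁻¹)ᵀ. -/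
open Matrix

def phiTuple {m n r : ℕ} (X : Matrix (Fin m) (Fin r) ℂ)
    (Y : Matrix (Fin n) (Fin r) ℂ) : Fin r → Matrix (Fin m) (Fin n) ℂ :=
  fun i => vecMulVec (fun k => X k i) (fun l => Y l i)

/-! A rank-one matrix `u vᵀ` determines the pair `(u, v)` up to a rescaling `(c u, c⁻¹ v)` with
`c ≠ 0`, provided `u` and `v` are both zero or both nonzero; equal column supports guarantee
exactly this for every pair of columns `(X_i, Y_i)`. Matching the rank-one components along the
permutation thus gives scalars `c_i`, and the columns of `X'` and `Y'` are those of `X G` and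
`Y G⁻ᵀ` for the generalized permutation matrix `G` built from the permutation and the `c_i`. -/

theorem Matrix.exists_smul_of_vecMulVec_eq {K m n : Type*} [Field K] {u u' : m → K}
    {v v' : n → K} (h : vecMulVec u' v' = vecMulVec u v) (huv : u = 0 ↔ v = 0)
    (huv' : u' = 0 ↔ v' = 0) : ∃ c : K, c ≠ 0 ∧ u' = c • u ∧ v' = c⁻¹ • v := by
  have hentry : ∀ k l, u' k * v' l = u k * v l := fun k l => by
    simpa only [vecMulVec_apply] using congr($h k l)
  by_cases hu : u = 0
  · have hu' : u' = 0 := by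
      by_contra hne
      obtain ⟨k, hk : u' k ≠ 0⟩ := Function.ne_iff.mp hne
      obtain ⟨l, hl : v' l ≠ 0⟩ := Function.ne_iff.mp (mt huv'.mpr hne)
      exact mul_ne_zero hk hl (by simp [hentry, hu])
    exact ⟨1, one_ne_zero, by simp [hu, hu'], by simp [huv.mp hu, huv'.mp hu']⟩
  obtain ⟨k₀, hk₀ : u k₀ ≠ 0⟩ := Function.ne_iff.mp hu
  obtain ⟨l₀, hl₀ : v l₀ ≠ 0⟩ := Function.ne_iff.mp (mt huv.mpr hu)
  have hne : u' k₀ * v' l₀ ≠ 0 := hentry k₀ l₀ ▸ mul_ne_zero hk₀ hl₀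
  have hv'l₀ : v' l₀ ≠ 0 := right_ne_zero_of_mul hne
  refine ⟨v l₀ / v' l₀, div_ne_zero hl₀ hv'l₀, funext fun k => ?_, funext fun l => ?_⟩
  · simp only [Pi.smul_apply, smul_eq_mul]
    field_simp
    linear_combination hentry k l₀
  · have hcancel : v' l * v l₀ = v' l₀ * v l := mul_left_cancel₀ (left_ne_zero_of_mul hne) <| by
      linear_combination v l₀ * hentry k₀ l - v l * hentry k₀ l₀
    simp only [Pi.smul_apply, smul_eq_mul, inv_div]
    field_simp
    linear_combination hcancel

theorem transpose_apply_eq_zero_iff_notMem_colsupp {a b : ℕ} (X : Matrix (Fin a) (Fin b) ℂ)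
    (j : Fin b) : Xᵀ j = 0 ↔ j ∉ Colsupp X := by
  simp [Colsupp, funext_iff]

theorem transpose_apply_eq_zero_iff_of_colsupp_eq {a b r : ℕ} {X : Matrix (Fin a) (Fin r) ℂ}
    {Y : Matrix (Fin b) (Fin r) ℂ} (h : Colsupp X = Colsupp Y) (j : Fin r) :
    Xᵀ j = 0 ↔ Yᵀ j = 0 := by
  rw [transpose_apply_eq_zero_iff_notMem_colsupp, transpose_apply_eq_zero_iff_notMem_colsupp, h]

section GenPerm

variable {K ι : Type*} [Fintype ι] [DecidableEq ι]

def genPermMatrix [Zero K] (σ : Equiv.Perm ι) (d : ι → K) : Matrix ι ι K :=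
  Matrix.of fun i j => if i = σ j then d i else 0

theorem mul_genPermMatrix_apply [NonUnitalNonAssocSemiring K] {κ : Type*} (A : Matrix κ ι K)
    (σ : Equiv.Perm ι) (d : ι → K) (k : κ) (j : ι) :
    (A * genPermMatrix σ d) k j = A k (σ j) * d (σ j) := by
  simp [genPermMatrix, Matrix.mul_apply]

theorem inv_genPermMatrix_transpose [Field K] {σ : Equiv.Perm ι} {d : ι → K}
    (hd : ∀ i, d i ≠ 0) : (genPermMatrix σ d)⁻¹ᵀ = genPermMatrix σ d⁻¹ := by
  suffices (genPermMatrix σ d⁻¹)ᵀ * genPermMatrix σ d = 1 by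
    rw [inv_eq_left_inv this, transpose_transpose]
  ext i j
  rw [mul_genPermMatrix_apply]
  by_cases hij : i = j
  · simp [genPermMatrix, one_apply, hij, hd]
  · simp [genPermMatrix, one_apply, hij, Ne.symm hij]

end GenPerm

theorem isGenPerm_genPermMatrix {r : ℕ} (σ : Equiv.Perm (Fin r)) {d : Fin r → ℂ}
    (hd : ∀ i, d i ≠ 0) : IsGenPerm (genPermMatrix σ d) :=
  ⟨σ, d, hd, fun _ _ => rfl⟩

theorem psEquiv_of_transpose_eq_smul {m n r : ℕ} {X X' : Matrix (Fin m) (Fin r) ℂ}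
    {Y Y' : Matrix (Fin n) (Fin r) ℂ} (σ : Equiv.Perm (Fin r)) {c : Fin r → ℂ}
    (hc : ∀ i, c i ≠ 0) (hX : ∀ i, X'ᵀ i = c i • Xᵀ (σ i))
    (hY : ∀ i, Y'ᵀ i = (c i)⁻¹ • Yᵀ (σ i)) : PSEquiv (X, Y) (X', Y') := by
  have hd : ∀ j, (c ∘ σ.symm) j ≠ 0 := fun j => hc _
  refine ⟨genPermMatrix σ (c ∘ σ.symm), isGenPerm_genPermMatrix σ hd, ?_, ?_⟩
  -- `PSEquiv` elaborated its products with the (defeq) `CStarMatrix` instance; restate them.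
  · change X' = X * genPermMatrix σ (c ∘ σ.symm)
    ext k i
    rw [mul_genPermMatrix_apply]
    simpa [mul_comm] using congr($(hX i) k)
  · change Y' = Y * (genPermMatrix σ (c ∘ σ.symm))⁻¹ᵀ
    ext l i
    rw [inv_genPermMatrix_transpose hd, mul_genPermMatrix_apply]
    simpa [mul_comm] using congr($(hY i) l)

theorem stmt11_general {m n r : ℕ}
    (X X' : Matrix (Fin m) (Fin r) ℂ) (Y Y' : Matrix (Fin n) (Fin r) ℂ)
    (hcs : Colsupp X = Colsupp Y)
    (hcs' : Colsupp X' = Colsupp Y')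
    (hperm : ∃ σ : Equiv.Perm (Fin r), ∀ i, phiTuple X' Y' i = phiTuple X Y (σ i)) :
    PSEquiv (X, Y) (X', Y') := by
  obtain ⟨σ, hσ⟩ := hperm
  choose c hc hX hY using fun i =>
    exists_smul_of_vecMulVec_eq (hσ i) (transpose_apply_eq_zero_iff_of_colsupp_eq hcs (σ i))
      (transpose_apply_eq_zero_iff_of_colsupp_eq hcs' i)
  exact psEquiv_of_transpose_eq_smul σ hc hX hY

theorem stmt11 {m n r : ℕ} (Om : Set (Set (Fin m × Fin r) × Set (Fin n × Fin r)))
    (X X' : Matrix (Fin m) (Fin r) ℂ) (Y Y' : Matrix (Fin n) (Fin r) ℂ)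
    (hXY : (X, Y) ∈ SigmaOm Om) (hcs : Colsupp X = Colsupp Y)
    (hXY' : (X', Y') ∈ SigmaOm Om) (hcs' : Colsupp X' = Colsupp Y')
    (hperm : ∃ σ : Equiv.Perm (Fin r), ∀ i, phiTuple X' Y' i = phiTuple X Y (σ i)) :
    PSEquiv (X, Y) (X', Y') :=
  stmt11_general X X' Y Y' hcs hcs' hperm
end

section
/- Let S = (S^1,…,S^r) be an r-tuple of m×n binary supports, each of rank at most one (as a binary matrix), and let Γ_S be the set of r-tuples (C^1,…,C^r) of m×n complex matrices with rank(C^i) ≤ 1 and supp(C^i) ⊆ S^i for each i. Then the following are equivalent: (i) every tuple in Γ_S is the unique (up to permutation of indices) decomposition of its sum within Γ_S; (ii) the linear map (C^1,…,C^r) ↦ Σᵢ C^i restricted to Γ_S is injective; (iii) the supports S^1,…,S^r, viewed as subsets of index pairs, are pairwise disjoint. -/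
open Matrix

/-- The set Γ_S of r-tuples of rank-at-most-one matrices with supports
contained in the given tuple of rank-one supports. -/
def GammaS {m n r : ℕ} (S : Fin r → Set (Fin m × Fin n)) :
    Set (Fin r → Matrix (Fin m) (Fin n) ℂ) :=
  {C | ∀ i, (C i).rank ≤ 1 ∧ ∀ k l, C i k l ≠ 0 → (k, l) ∈ S i}

/-!
If the supports are pairwise disjoint, each entry of `∑ i, C i` lies in at most one support, so
it is an entry of a single summand; hence the sum determines the tuple. Conversely, if `(k, l)`
lies in `S i ∩ S j` with `i ≠ j`, the tuples `(E_kl at i, E_kl at j)` and `(2 E_kl at i)` have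
the same sum, yet the entry `2` of the second tuple occurs in no component of the first.
-/

namespace Matrix

theorem single_eq_vecMulVec {R m n : Type*} [MulZeroOneClass R] [DecidableEq m] [DecidableEq n]
    (i : m) (j : n) (c : R) : single i j c = vecMulVec (Pi.single i c) (Pi.single j 1) := by
  ext a b
  by_cases ha : a = i <;> by_cases hb : b = j <;> simp [vecMulVec_apply, ha, hb, Ne.symm]

theorem rank_single_le_one {R m n : Type*} [CommRing R] [StrongRankCondition R] [Fintype n]
    [DecidableEq m] [DecidableEq n] (i : m) (j : n) (c : R) : (single i j c).rank ≤ 1 :=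
  single_eq_vecMulVec i j c ▸ rank_vecMulVec_le _ _

end Matrix

section PairwiseDisjointSupports

variable {ι m n α : Type*} [Fintype ι] [AddCommMonoid α] {S : ι → Set (m × n)}

theorem sum_apply_eq_of_pairwise_disjoint (hS : Pairwise fun i j => Disjoint (S i) (S j))
    {C : ι → Matrix m n α} (hC : ∀ i k l, C i k l ≠ 0 → (k, l) ∈ S i) {i : ι} {k : m} {l : n}
    (hkl : (k, l) ∈ S i) : (∑ t, C t) k l = C i k l := by
  rw [Matrix.sum_apply, Fintype.sum_eq_single i]
  intro t hti
  by_contra hne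
  exact Set.disjoint_left.mp (hS hti) (hC t k l hne) hkl

theorem eq_of_sum_eq_of_pairwise_disjoint (hS : Pairwise fun i j => Disjoint (S i) (S j))
    {C C' : ι → Matrix m n α} (hC : ∀ i k l, C i k l ≠ 0 → (k, l) ∈ S i)
    (hC' : ∀ i k l, C' i k l ≠ 0 → (k, l) ∈ S i) (hsum : ∑ i, C' i = ∑ i, C i) : C' = C := by
  funext i
  ext k l
  by_cases hkl : (k, l) ∈ S i
  · rw [← sum_apply_eq_of_pairwise_disjoint hS hC hkl,
      ← sum_apply_eq_of_pairwise_disjoint hS hC' hkl, hsum]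
  · rw [not_imp_comm.mp (hC i k l) hkl, not_imp_comm.mp (hC' i k l) hkl]

end PairwiseDisjointSupports

theorem single_mem_GammaS {m n r : ℕ} {S : Fin r → Set (Fin m × Fin n)} {k : Fin m} {l : Fin n}
    {c : Fin r → ℂ} (hc : ∀ t, c t ≠ 0 → (k, l) ∈ S t) :
    (fun t => single k l (c t)) ∈ GammaS S := by
  refine fun t => ⟨rank_single_le_one k l (c t), fun a b hab => ?_⟩
  obtain ⟨rfl, rfl, hct⟩ : k = a ∧ l = b ∧ c t ≠ 0 := by
    simpa [single_apply] using hab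
  exact hc t hct

theorem pairwise_disjoint_of_unique_up_to_perm {m n r : ℕ} {S : Fin r → Set (Fin m × Fin n)}
    (h : ∀ C ∈ GammaS S, ∀ C' ∈ GammaS S, (∑ i, C' i) = (∑ i, C i) →
      ∃ σ : Equiv.Perm (Fin r), ∀ i, C' i = C (σ i)) :
    Pairwise fun i j => Disjoint (S i) (S j) := by
  intro i j hij
  refine Set.disjoint_left.mpr fun ⟨k, l⟩ hi hj => ?_
  set c : Fin r → ℂ := Pi.single i 1 + Pi.single j 1
  set c' : Fin r → ℂ := Pi.single i 2
  have hc : ∀ t, c t ≠ 0 → (k, l) ∈ S t := by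
    intro t ht
    by_cases hti : t = i
    · exact hti ▸ hi
    by_cases htj : t = j
    · exact htj ▸ hj
    simp [c, hti, htj] at ht
  have hc' : ∀ t, c' t ≠ 0 → (k, l) ∈ S t := by
    intro t ht
    by_cases hti : t = i
    · exact hti ▸ hi
    simp [c', hti] at ht
  have hsum : ∑ t, single k l (c' t) = ∑ t, single k l (c t) := by
    have hc_sum : ∑ t, c t = ∑ t, c' t := by
      simp only [c, c', Pi.add_apply, Finset.sum_add_distrib, Finset.sum_pi_single',
        Finset.mem_univ, if_true]
      norm_num
    simp only [← singleAddMonoidHom_apply, ← map_sum, hc_sum]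
  obtain ⟨σ, hσ⟩ := h _ (single_mem_GammaS hc) _ (single_mem_GammaS hc') hsum
  have h2 : 2 = c (σ i) := by
    simpa [c'] using congrFun (congrFun (hσ i) k) l
  simp only [c, Pi.add_apply, Pi.single_apply] at h2
  split_ifs at h2 with hi' hj' <;> norm_num at h2
  exact hij (hi'.symm.trans hj')

theorem stmt12_general {m n r : ℕ} (S : Fin r → Set (Fin m × Fin n)) :
    ((∀ C ∈ GammaS S, ∀ C' ∈ GammaS S, (∑ i, C' i) = (∑ i, C i) →
        ∃ σ : Equiv.Perm (Fin r), ∀ i, C' i = C (σ i)) ↔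
      Pairwise (fun i j => Disjoint (S i) (S j))) ∧
    ((∀ C ∈ GammaS S, ∀ C' ∈ GammaS S, (∑ i, C' i) = (∑ i, C i) → C' = C) ↔
      Pairwise (fun i j => Disjoint (S i) (S j))) := by
  have inj_of_disjoint : Pairwise (fun i j => Disjoint (S i) (S j)) →
      ∀ C ∈ GammaS S, ∀ C' ∈ GammaS S, (∑ i, C' i) = (∑ i, C i) → C' = C :=
    fun hS C hC C' hC' hsum =>
      eq_of_sum_eq_of_pairwise_disjoint hS (fun i => (hC i).2) (fun i => (hC' i).2) hsum
  have perm_of_inj : (∀ C ∈ GammaS S, ∀ C' ∈ GammaS S, (∑ i, C' i) = (∑ i, C i) → C' = C) →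
      ∀ C ∈ GammaS S, ∀ C' ∈ GammaS S, (∑ i, C' i) = (∑ i, C i) →
        ∃ σ : Equiv.Perm (Fin r), ∀ i, C' i = C (σ i) :=
    fun h C hC C' hC' hsum => ⟨1, fun i => congrFun (h C hC C' hC' hsum) i⟩
  exact ⟨⟨pairwise_disjoint_of_unique_up_to_perm, perm_of_inj ∘ inj_of_disjoint⟩,
    ⟨pairwise_disjoint_of_unique_up_to_perm ∘ perm_of_inj, inj_of_disjoint⟩⟩

theorem stmt12 {m n r : ℕ} (S : Fin r → Set (Fin m × Fin n))
    (hrk : ∀ i, ∃ (R : Set (Fin m)) (Cs : Set (Fin n)), S i = R ×ˢ Cs) :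
    ((∀ C ∈ GammaS S, ∀ C' ∈ GammaS S, (∑ i, C' i) = (∑ i, C i) →
        ∃ σ : Equiv.Perm (Fin r), ∀ i, C' i = C (σ i)) ↔
      Pairwise (fun i j => Disjoint (S i) (S j))) ∧
    ((∀ C ∈ GammaS S, ∀ C' ∈ GammaS S, (∑ i, C' i) = (∑ i, C i) → C' = C) ↔
      Pairwise (fun i j => Disjoint (S i) (S j))) :=
  stmt12_general S
end

section
/- Let (S_L,S_R) be a pair of supports such that the rank-one supports S_L,i × S_R,i (for i = 1,…,r, where S_L,i and S_R,i are the supports of the i-th columns) are pairwise disjoint. Then the set of pairs (X,Y) with supp(X) ⊆ S_L, supp(Y) ⊆ S_R that are unique factorizations of XYᵀ up to scaling only (no permutation needed) is exactly the set of pairs (X,Y) with supp(X) ⊆ S_L, supp(Y) ⊆ S_R satisfying colsupp(X) = colsupp(Y) = colsupp(S_L) = colsupp(S_R). -/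
open Matrix

/-- The fixed-support constraint set for a pair of supports. -/
def SigmaPair {m n r : ℕ} (SL : Set (Fin m × Fin r)) (SR : Set (Fin n × Fin r)) :
    Set (Matrix (Fin m) (Fin r) ℂ × Matrix (Fin n) (Fin r) ℂ) :=
  {p | SuppSub p.1 SL ∧ SuppSub p.2 SR}

/-- Equivalence up to scaling only. -/
def ScaleEquiv {m n r : ℕ}
    (p q : Matrix (Fin m) (Fin r) ℂ × Matrix (Fin n) (Fin r) ℂ) : Prop :=
  ∃ d : Fin r → ℂ, (∀ i, d i ≠ 0) ∧
    q.1 = p.1 * Matrix.diagonal d ∧ q.2 = p.2 * Matrix.diagonal (fun i => (d i)⁻¹)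

/-- The support of the i-th column of a support, as a set of row indices. -/
def ColSet {a r : ℕ} (S : Set (Fin a × Fin r)) (i : Fin r) : Set (Fin a) :=
  {k | (k, i) ∈ S}

lemma prod_apply' {m n r : ℕ} (X : Matrix (Fin m) (Fin r) ℂ) (Y : Matrix (Fin n) (Fin r) ℂ)
    (k : Fin m) (l : Fin n) :
    (X * Yᵀ) k l = ∑ i, X k i * Y l i := by
  simp [Matrix.mul_apply]

lemma key_entry {m n r : ℕ} (SL : Set (Fin m × Fin r)) (SR : Set (Fin n × Fin r))
    (hdisj : ∀ i j : Fin r, i ≠ j →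
      Disjoint ((ColSet SL i) ×ˢ (ColSet SR i)) ((ColSet SL j) ×ˢ (ColSet SR j)))
    {X : Matrix (Fin m) (Fin r) ℂ} {Y : Matrix (Fin n) (Fin r) ℂ}
    (hX : SuppSub X SL) (hY : SuppSub Y SR) {k : Fin m} {l : Fin n} {i : Fin r}
    (hk : (k, i) ∈ SL) (hl : (l, i) ∈ SR) :
    (X * Yᵀ) k l = X k i * Y l i := by
  rw [prod_apply']
  apply Finset.sum_eq_single_of_mem i (Finset.mem_univ i)
  intro j _ hji
  by_contra h
  have hXkj : X k j ≠ 0 := fun h0 => h (by simp [h0])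
  have hYlj : Y l j ≠ 0 := fun h0 => h (by simp [h0])
  have h1 : (k, l) ∈ (ColSet SL i) ×ˢ (ColSet SR i) := ⟨hk, hl⟩
  have h2 : (k, l) ∈ (ColSet SL j) ×ˢ (ColSet SR j) := ⟨hX k j hXkj, hY l j hYlj⟩
  exact Set.disjoint_left.mp (hdisj i j (Ne.symm hji)) h1 h2

theorem stmt13 {m n r : ℕ} (SL : Set (Fin m × Fin r)) (SR : Set (Fin n × Fin r))
    (hdisj : ∀ i j : Fin r, i ≠ j →
      Disjoint ((ColSet SL i) ×ˢ (ColSet SR i)) ((ColSet SL j) ×ˢ (ColSet SR j))) :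
    {p ∈ SigmaPair SL SR |
        ∀ q ∈ SigmaPair SL SR, q.1 * q.2ᵀ = p.1 * p.2ᵀ → ScaleEquiv p q} =
      {p ∈ SigmaPair SL SR |
        Colsupp p.1 = Colsupp p.2 ∧ Colsupp p.1 = ColsuppS SL ∧
          Colsupp p.2 = ColsuppS SR} := by
  classical
  ext p
  obtain ⟨X, Y⟩ := p
  simp only [Set.mem_setOf_eq]
  constructor
  · rintro ⟨⟨hX, hY⟩, hu⟩
    have hA : Colsupp X = Colsupp Y := by
      ext i
      simp only [Colsupp, Set.mem_setOf_eq]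
      constructor
      · rintro ⟨k0, hk0⟩
        by_contra hYi
        push_neg at hYi
        set X' : Matrix (Fin m) (Fin r) ℂ :=
          Matrix.of fun k j => if j = i then 0 else X k j with hX'def
        have hq : (X', Y) ∈ SigmaPair SL SR := by
          refine ⟨?_, hY⟩
          intro k j h
          by_cases hji : j = i
          · simp [hX'def, hji] at h
          · exact hX k j (by simpa [hX'def, hji] using h)
        have hprod : X' * Yᵀ = X * Yᵀ := by
          ext k l
          rw [prod_apply', prod_apply']
          refine Finset.sum_congr rfl fun j _ => ?_
          by_cases hji : j = i
          · subst hji; simp [hX'def, hYi l]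
          · simp [hX'def, hji]
        obtain ⟨d, hd, h1, h2⟩ := hu (X', Y) hq hprod
        have h := congrFun (congrFun h1 k0) i
        rw [Matrix.mul_diagonal] at h
        simp only [hX'def, Matrix.of_apply, if_pos rfl] at h
        exact (mul_ne_zero hk0 (hd i)) h.symm
      · rintro ⟨l0, hl0⟩
        by_contra hXi
        push_neg at hXi
        set Y' : Matrix (Fin n) (Fin r) ℂ :=
          Matrix.of fun l j => if j = i then 0 else Y l j with hY'def
        have hq : (X, Y') ∈ SigmaPair SL SR := by
          refine ⟨hX, ?_⟩
          intro l j h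
          by_cases hji : j = i
          · simp [hY'def, hji] at h
          · exact hY l j (by simpa [hY'def, hji] using h)
        have hprod : X * Y'ᵀ = X * Yᵀ := by
          ext k l
          rw [prod_apply', prod_apply']
          refine Finset.sum_congr rfl fun j _ => ?_
          by_cases hji : j = i
          · subst hji; simp [hY'def, hXi k]
          · simp [hY'def, hji]
        obtain ⟨d, hd, h1, h2⟩ := hu (X, Y') hq hprod
        have h := congrFun (congrFun h2 l0) i
        rw [Matrix.mul_diagonal] at h
        simp only [hY'def, Matrix.of_apply, if_pos rfl] at h
        exact (mul_ne_zero hl0 (inv_ne_zero (hd i))) h.symm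
    refine ⟨⟨hX, hY⟩, hA, ?_, ?_⟩
    · -- Step B : Colsupp X = ColsuppS SL
      ext i
      simp only [Colsupp, ColsuppS, Set.mem_setOf_eq]
      constructor
      · rintro ⟨k, hk⟩; exact ⟨k, hX k i hk⟩
      · rintro ⟨k, hki⟩
        by_contra hXi
        push_neg at hXi
        have hYi : ∀ l, Y l i = 0 := by
          intro l
          by_contra hl
          have : i ∈ Colsupp X := hA ▸ ⟨l, hl⟩
          obtain ⟨k', hk'⟩ := this
          exact hk' (hXi k')
        set X' : Matrix (Fin m) (Fin r) ℂ :=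
          Matrix.of fun k' j => if k' = k ∧ j = i then 1 else X k' j with hX'def
        have hq : (X', Y) ∈ SigmaPair SL SR := by
          refine ⟨?_, hY⟩
          intro k' j h
          by_cases hc : k' = k ∧ j = i
          · rw [hc.1, hc.2]; exact hki
          · exact hX k' j (by simpa [hX'def, hc] using h)
        have hprod : X' * Yᵀ = X * Yᵀ := by
          ext k' l
          rw [prod_apply', prod_apply']
          refine Finset.sum_congr rfl fun j _ => ?_
          by_cases hji : j = i
          · subst hji; simp [hYi l]
          · have hn : ¬(k' = k ∧ j = i) := fun hc => hji hc.2
            simp [hX'def, hn]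
        obtain ⟨d, hd, h1, h2⟩ := hu (X', Y) hq hprod
        have h := congrFun (congrFun h1 k) i
        rw [Matrix.mul_diagonal] at h
        simp only [hX'def, Matrix.of_apply, if_pos (⟨rfl, rfl⟩ : k = k ∧ i = i)] at h
        rw [hXi k, zero_mul] at h
        exact one_ne_zero h
    · -- Step C : Colsupp Y = ColsuppS SR
      ext i
      simp only [Colsupp, ColsuppS, Set.mem_setOf_eq]
      constructor
      · rintro ⟨l, hl⟩; exact ⟨l, hY l i hl⟩
      · rintro ⟨l, hli⟩
        by_contra hYi
        push_neg at hYi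
        have hXi : ∀ k, X k i = 0 := by
          intro k
          by_contra hk
          have : i ∈ Colsupp Y := hA ▸ ⟨k, hk⟩
          obtain ⟨l', hl'⟩ := this
          exact hl' (hYi l')
        set Y' : Matrix (Fin n) (Fin r) ℂ :=
          Matrix.of fun l' j => if l' = l ∧ j = i then 1 else Y l' j with hY'def
        have hq : (X, Y') ∈ SigmaPair SL SR := by
          refine ⟨hX, ?_⟩
          intro l' j h
          by_cases hc : l' = l ∧ j = i
          · rw [hc.1, hc.2]; exact hli
          · exact hY l' j (by simpa [hY'def, hc] using h)
        have hprod : X * Y'ᵀ = X * Yᵀ := by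
          ext k l'
          rw [prod_apply', prod_apply']
          refine Finset.sum_congr rfl fun j _ => ?_
          by_cases hji : j = i
          · subst hji; simp [hXi k]
          · have hn : ¬(l' = l ∧ j = i) := fun hc => hji hc.2
            simp [hY'def, hn]
        obtain ⟨d, hd, h1, h2⟩ := hu (X, Y') hq hprod
        have h := congrFun (congrFun h2 l) i
        rw [Matrix.mul_diagonal] at h
        simp only [hY'def, Matrix.of_apply, if_pos (⟨rfl, rfl⟩ : l = l ∧ i = i)] at h
        rw [hYi l, zero_mul] at h
        exact one_ne_zero h
  · rintro ⟨⟨hX, hY⟩, hXY, hXL, hYR⟩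
    refine ⟨⟨hX, hY⟩, ?_⟩
    rintro ⟨X', Y'⟩ ⟨hX', hY'⟩ hprod
    have hkey : ∀ (k : Fin m) (l : Fin n) (i : Fin r), (k, i) ∈ SL → (l, i) ∈ SR →
        X k i * Y l i = X' k i * Y' l i := by
      intro k l i hk hl
      rw [← key_entry SL SR hdisj hX hY hk hl, ← key_entry SL SR hdisj hX' hY' hk hl, hprod]
    have hchoice : ∀ i : Fin r, ∃ c : ℂ, c ≠ 0 ∧
        (∀ k, X' k i = X k i * c) ∧ (∀ l, Y' l i = Y l i * c⁻¹) := by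
      intro i
      by_cases hi : ∃ k0, X k0 i ≠ 0
      · obtain ⟨k0, hk0⟩ := hi
        have hiY : i ∈ Colsupp Y := hXY ▸ ⟨k0, hk0⟩
        obtain ⟨l0, hl0⟩ := hiY
        have hk0S : (k0, i) ∈ SL := hX k0 i hk0
        have hl0S : (l0, i) ∈ SR := hY l0 i hl0
        have e0 : X k0 i * Y l0 i = X' k0 i * Y' l0 i := hkey k0 l0 i hk0S hl0S
        have hX'k0 : X' k0 i ≠ 0 := by
          intro h; rw [h, zero_mul] at e0; exact (mul_ne_zero hk0 hl0) e0
        have hY'l0 : Y' l0 i ≠ 0 := by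
          intro h; rw [h, mul_zero] at e0; exact (mul_ne_zero hk0 hl0) e0
        refine ⟨X' k0 i / X k0 i, div_ne_zero hX'k0 hk0, ?_, ?_⟩
        · intro k
          by_cases hcase : X k i = 0 ∧ X' k i = 0
          · rw [hcase.1, hcase.2, zero_mul]
          · have hkS : (k, i) ∈ SL := by
              rcases not_and_or.mp hcase with h | h
              · exact hX k i h
              · exact hX' k i h
            have e1 : X k i * Y l0 i = X' k i * Y' l0 i := hkey k l0 i hkS hl0S
            have h3 : (X' k i * X k0 i) * Y' l0 i = (X k i * X' k0 i) * Y' l0 i := by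
              calc (X' k i * X k0 i) * Y' l0 i = X k0 i * (X' k i * Y' l0 i) := by ring
                _ = X k0 i * (X k i * Y l0 i) := by rw [← e1]
                _ = X k i * (X k0 i * Y l0 i) := by ring
                _ = X k i * (X' k0 i * Y' l0 i) := by rw [e0]
                _ = (X k i * X' k0 i) * Y' l0 i := by ring
            have h4 := mul_right_cancel₀ hY'l0 h3
            field_simp
            linear_combination h4
        · intro l
          rw [inv_div]
          by_cases hcase : Y l i = 0 ∧ Y' l i = 0
          · rw [hcase.1, hcase.2, zero_mul]
          · have hlS : (l, i) ∈ SR := by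
              rcases not_and_or.mp hcase with h | h
              · exact hY l i h
              · exact hY' l i h
            have e2 : X k0 i * Y l i = X' k0 i * Y' l i := hkey k0 l i hk0S hlS
            field_simp
            linear_combination -e2
      · push_neg at hi
        have hiX : i ∉ Colsupp X := fun ⟨k, hk⟩ => hk (hi k)
        have hSL : ∀ k, (k, i) ∉ SL := by
          intro k hk
          exact hiX (hXL ▸ (⟨k, hk⟩ : i ∈ ColsuppS SL))
        have hiY : i ∉ Colsupp Y := fun h => hiX (hXY ▸ h)
        have hSR : ∀ l, (l, i) ∉ SR := by
          intro l hl
          exact hiY (hYR ▸ (⟨l, hl⟩ : i ∈ ColsuppS SR))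
        have hX'0 : ∀ k, X' k i = 0 := fun k => by
          by_contra h; exact hSL k (hX' k i h)
        have hY0 : ∀ l, Y l i = 0 := fun l => by
          by_contra h; exact hiY ⟨l, h⟩
        have hY'0 : ∀ l, Y' l i = 0 := fun l => by
          by_contra h; exact hSR l (hY' l i h)
        exact ⟨1, one_ne_zero, fun k => by rw [hX'0 k, hi k, zero_mul],
          fun l => by rw [hY'0 l, hY0 l, zero_mul]⟩
    choose d hd hdX hdY using hchoice
    refine ⟨d, hd, ?_, ?_⟩
    · ext k j
      rw [Matrix.mul_diagonal]
      exact hdX j k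
    · ext l j
      rw [Matrix.mul_diagonal]
      exact hdY j l
end

section
/- Let X be an m×r matrix and Θ a family of n×r binary supports, viewed as families of subsets of indices. Define 𝓘 as the collection of all sets of the form (row k of S) ∪ (row k of S') for S, S' ∈ Θ and k ∈ {1,…,n}. Then the linear map Y ↦ XYᵀ restricted to Σ_Θ = ∪_{S∈Θ}{Y : supp(Y) ⊆ S} is injective if and only if for every I ∈ 𝓘 the columns of X indexed by I are linearly independent. -/
open Matrix

theorem stmt15 {m n r : ℕ} (X : Matrix (Fin m) (Fin r) ℂ)
    (Th : Set (Set (Fin n × Fin r))) :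
    (∀ Y ∈ SigmaTh Th, ∀ Y' ∈ SigmaTh Th, X * Yᵀ = X * Y'ᵀ → Y = Y') ↔
      ∀ S ∈ Th, ∀ S' ∈ Th, ∀ k : Fin n,
        LinearIndependent ℂ
          (fun l : {l : Fin r // (k, l) ∈ S ∨ (k, l) ∈ S'} => fun i => X i l.1) := by
  classical
  constructor
  · intro hinj S hS S' hS' k
    rw [Fintype.linearIndependent_iff]
    intro g hg
    set c : Fin r → ℂ :=
      fun l => if h : (k, l) ∈ S ∨ (k, l) ∈ S' then g ⟨l, h⟩ else 0 with hcdef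
    set Y : Matrix (Fin n) (Fin r) ℂ :=
      fun k' l => if k' = k ∧ (k, l) ∈ S then c l else 0 with hYdef
    set Y' : Matrix (Fin n) (Fin r) ℂ :=
      fun k' l => if k' = k ∧ (k, l) ∉ S ∧ (k, l) ∈ S' then -c l else 0 with hY'def
    have hYmem : Y ∈ SigmaTh Th := by
      refine ⟨S, hS, fun i j h => ?_⟩
      by_contra hc
      apply h
      simp only [hYdef]
      rw [if_neg]
      rintro ⟨rfl, h2⟩; exact hc h2
    have hY'mem : Y' ∈ SigmaTh Th := by
      refine ⟨S', hS', fun i j h => ?_⟩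
      by_contra hc
      apply h
      simp only [hY'def]
      rw [if_neg]
      rintro ⟨rfl, _, h2⟩; exact hc h2
    have hgi : ∀ i : Fin m,
        ∑ l : {l : Fin r // (k, l) ∈ S ∨ (k, l) ∈ S'}, g l * X i l.1 = 0 := by
      intro i
      simpa [Finset.sum_apply] using congrFun hg i
    have hsum : ∀ i : Fin m,
        ∑ l : Fin r, X i l * (if (k, l) ∈ S ∨ (k, l) ∈ S' then c l else 0) = 0 := by
      intro i
      have h1 : ∑ l : Fin r, X i l * (if (k, l) ∈ S ∨ (k, l) ∈ S' then c l else 0)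
          = ∑ l ∈ Finset.univ.filter (fun l => (k, l) ∈ S ∨ (k, l) ∈ S'),
              X i l * c l := by
        rw [Finset.sum_filter]
        apply Finset.sum_congr rfl
        intro l _
        split_ifs <;> simp
      rw [h1, Finset.sum_subtype (p := fun l => (k, l) ∈ S ∨ (k, l) ∈ S')
        (Finset.univ.filter (fun l => (k, l) ∈ S ∨ (k, l) ∈ S'))
        (by simp) (fun l => X i l * c l)]
      rw [← hgi i]
      apply Finset.sum_congr rfl
      intro l _
      simp only [hcdef, dif_pos l.2]
      exact mul_comm _ _
    have heq : X * Yᵀ = X * Y'ᵀ := by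
      ext i k'
      simp only [mul_apply, transpose_apply]
      by_cases hk : k' = k
      · subst hk
        rw [← sub_eq_zero, ← Finset.sum_sub_distrib, ← hsum i]
        apply Finset.sum_congr rfl
        intro l _
        simp only [hYdef, hY'def]
        by_cases h1 : (k', l) ∈ S <;> by_cases h2 : (k', l) ∈ S' <;>
          simp [h1, h2]
      · simp [hYdef, hY'def, hk]
    have hYY' := hinj Y hYmem Y' hY'mem heq
    intro l
    have hl := congrFun (congrFun hYY' k) l.1
    simp only [hYdef, hY'def] at hl
    have hgl : g l = c l.1 := by simp only [hcdef, dif_pos l.2]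
    rw [hgl]
    by_cases h0 : (k, l.1) ∈ S
    · simpa [h0] using hl
    · rcases l.2 with h1 | h1
      · exact absurd h1 h0
      · have : (0 : ℂ) = -c l.1 := by simpa [h0, h1] using hl
        exact neg_eq_zero.mp this.symm
  · rintro h Y ⟨S, hS, hYS⟩ Y' ⟨S', hS', hY'S⟩ heq
    ext k l
    by_cases hP : (k, l) ∈ S ∨ (k, l) ∈ S'
    · have hli := h S hS S' hS' k
      rw [Fintype.linearIndependent_iff] at hli
      have key := hli (fun l : {l // (k, l) ∈ S ∨ (k, l) ∈ S'} => Y k l.1 - Y' k l.1)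
        ?_ ⟨l, hP⟩
      · exact sub_eq_zero.mp key
      · funext i
        simp only [Finset.sum_apply, Pi.smul_apply, smul_eq_mul, Pi.zero_apply]
        have h1 : ∑ x : {l // (k, l) ∈ S ∨ (k, l) ∈ S'}, (Y k x.1 - Y' k x.1) * X i x.1
            = ∑ x : Fin r, (Y k x - Y' k x) * X i x := by
          rw [← Finset.sum_subtype (p := fun x => (k, x) ∈ S ∨ (k, x) ∈ S')
            (Finset.univ.filter (fun x => (k, x) ∈ S ∨ (k, x) ∈ S'))
            (by simp) (fun x => (Y k x - Y' k x) * X i x)]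
          apply Finset.sum_filter_of_ne
          intro x _ hx
          by_contra hPx
          rw [not_or] at hPx
          apply hx
          have hY0 : Y k x = 0 := by
            by_contra hc; exact hPx.1 (hYS k x hc)
          have hY'0 : Y' k x = 0 := by
            by_contra hc; exact hPx.2 (hY'S k x hc)
          rw [hY0, hY'0, sub_zero, zero_mul]
        rw [h1]
        have h2 := congrFun (congrFun heq i) k
        simp only [mul_apply, transpose_apply] at h2
        calc ∑ x : Fin r, (Y k x - Y' k x) * X i x
            = ∑ x : Fin r, X i x * Y k x - ∑ x : Fin r, X i x * Y' k x := by
              rw [← Finset.sum_sub_distrib]; apply Finset.sum_congr rfl; intro x _; ring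
          _ = 0 := by rw [h2]; ring
    · rw [not_or] at hP
      have hY0 : Y k l = 0 := by by_contra hc; exact hP.1 (hYS k l hc)
      have hY'0 : Y' k l = 0 := by by_contra hc; exact hP.2 (hY'S k l hc)
      rw [hY0, hY'0]
end

section
/- Let X be an m×r matrix and let Σ be the set of n×r matrices that are k-sparse by column (each column has at most k nonzero entries), where k ∈ {1,…,n}. Then every pair (X,Y) with Y ∈ Σ is a PS-unique factorization of XYᵀ in {X} × Σ if, and only if, the Kruskal rank of X equals r (i.e., the columns of X are linearly independent). -/
open Matrix

/-!
Row `i` of `(X * Yᵀ)ᵀ` is `X *ᵥ Y i`, so when the columns of `X` are independent, `Y` is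
determined by `X * Yᵀ` and the identity is the required generalized permutation. Otherwise a
nonzero kernel vector `c` of `X`, placed as a single row, gives a `1`-sparse `Y ≠ 0` with
`X * Yᵀ = X * 0ᵀ`, whereas every factorization PS-equivalent to `(X, 0)` has second factor `0`.
-/

namespace Matrix

variable {R : Type*} [CommRing R] {l m n : Type*} [Fintype n]

theorem mul_transpose_injective {X : Matrix l n R} (hX : LinearIndependent R X.col) :
    Function.Injective fun Y : Matrix m n R => X * Yᵀ := by
  intro Y Y' h
  funext i
  apply mulVec_injective_iff.2 hX
  simpa [transpose_mul, mul_apply_eq_vecMul, vecMul_transpose] using congr_arg (fun M => Mᵀ i) h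

theorem exists_mulVec_eq_zero_of_not_linearIndependent_col {X : Matrix l n R}
    (hX : ¬LinearIndependent R X.col) : ∃ c ≠ 0, X *ᵥ c = 0 := by
  rw [← mulVec_injective_iff, ← coe_mulVecLin, injective_iff_map_eq_zero] at hX
  push Not at hX
  obtain ⟨c, hc, hne⟩ := hX
  exact ⟨c, hne, hc⟩

theorem mul_transpose_updateRow_zero [DecidableEq m] (X : Matrix l n R) (i₀ : m) (c : n → R) :
    X * ((0 : Matrix m n R).updateRow i₀ c)ᵀ = (0 : Matrix l m R).updateCol i₀ (X *ᵥ c) := by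
  rw [← updateCol_transpose, transpose_zero, mul_updateCol, Matrix.mul_zero]

end Matrix

theorem Matrix.ncard_setOf_updateRow_zero_ne_zero_le_one {α m n : Type*} [Zero α] [DecidableEq m]
    [Finite m] (i₀ : m) (c : n → α) (j : n) :
    {i | (0 : Matrix m n α).updateRow i₀ c i j ≠ 0}.ncard ≤ 1 := by
  refine (Set.ncard_le_ncard (t := {i₀}) ?_).trans (Set.ncard_singleton i₀).le
  intro i hi
  by_contra h
  simp [updateRow_ne h] at hi

theorem isGenPerm_one {r : ℕ} : IsGenPerm (1 : Matrix (Fin r) (Fin r) ℂ) :=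
  ⟨Equiv.refl _, fun _ => 1, fun _ => one_ne_zero, fun i j => by
    simp only [one_apply, Equiv.refl_apply]; congr⟩

theorem stmt17 {m n r : ℕ} (X : Matrix (Fin m) (Fin r) ℂ) (k : ℕ)
    (hk1 : 1 ≤ k) (hk2 : k ≤ n) :
    (∀ Y : Matrix (Fin n) (Fin r) ℂ,
        (∀ j : Fin r, {i : Fin n | Y i j ≠ 0}.ncard ≤ k) →
        (X, Y) ∈ PSUniqueSet
          {p | p.1 = X ∧ ∀ j : Fin r, {i : Fin n | p.2 i j ≠ 0}.ncard ≤ k}) ↔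
      LinearIndependent ℂ (fun j : Fin r => fun i => X i j) := by
  constructor
  · intro h
    by_contra hX
    obtain ⟨c, hc, hXc⟩ := exists_mulVec_eq_zero_of_not_linearIndependent_col hX
    let i₀ : Fin n := ⟨0, by omega⟩
    let Y := (0 : Matrix (Fin n) (Fin r) ℂ).updateRow i₀ c
    obtain ⟨-, hunique⟩ := h 0 (by simp)
    obtain ⟨G, -, -, hY⟩ := hunique (X, Y)
      ⟨rfl, fun j => (ncard_setOf_updateRow_zero_ne_zero_le_one i₀ c j).trans hk1⟩
      (by simp [Y, mul_transpose_updateRow_zero, hXc])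
    exact hc (funext fun j => by simpa [Y] using congr_fun (congr_fun hY i₀) j)
  · intro hX Y hY
    refine ⟨⟨rfl, hY⟩, ?_⟩
    rintro ⟨X', Y'⟩ ⟨rfl, -⟩ hprod
    exact ⟨1, isGenPerm_one, (Matrix.mul_one _).symm,
      by simpa using mul_transpose_injective hX hprod⟩
end

section
/- Let Θ be a family of n×r binary supports and Y an n×r complex matrix. Suppose that (1ᵀ, Y) is the unique factorization up to permutation and scaling of Y·1 (the sum of columns of Y) in {1ᵀ} × Σ_Θ, where 1ᵀ is the 1×r all-ones row matrix. Then the column supports supp(Y_1),…,supp(Y_r) of Y are pairwise disjoint. -/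
/-! If columns `i ≠ j` of `Y` are both nonzero in row `k`, moving an amount `t` from `Y k j` to
`Y k i` changes neither the row sums nor the support, so by uniqueness every such perturbation
equals `Y * (G⁻¹)ᵀ` for a generalized permutation `G` with `1ᵀ G = 1ᵀ`, i.e. a permutation matrix;
the perturbation is then a column permutation of `Y`. There are infinitely many `t` but only
finitely many column permutations of `Y`. -/

open Matrix

theorem IsGenPerm.exists_eq_permMatrix {r : ℕ} {G : Matrix (Fin r) (Fin r) ℂ} (hG : IsGenPerm G)
    (hsum : ∀ j, ∑ i, G i j = 1) : ∃ τ : Equiv.Perm (Fin r), G = τ.permMatrix ℂ := by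
  obtain ⟨σ, d, -, hGσ⟩ := hG
  have hd : ∀ i, d i = 1 := fun i => by
    simpa [hGσ, Finset.sum_ite_eq'] using hsum (σ.symm i)
  refine ⟨σ⁻¹, Matrix.ext fun i j => ?_⟩
  simp [hGσ, hd, Equiv.eq_symm_apply, eq_comm]

theorem Matrix.inv_permMatrix_transpose {n R : Type*} [Fintype n] [DecidableEq n] [CommRing R]
    (τ : Equiv.Perm n) : ((τ.permMatrix R)⁻¹)ᵀ = τ.permMatrix R := by
  rw [Matrix.inv_eq_right_inv (B := (τ⁻¹).permMatrix R), transpose_permMatrix, inv_inv]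
  rw [← permMatrix_mul, inv_mul_cancel, permMatrix_one]

theorem PSEquiv.exists_submatrix_eq_of_ones {n r : ℕ} {ones : Matrix (Fin 1) (Fin r) ℂ}
    (hones : ∀ a b, ones a b = 1) {Y Y' : Matrix (Fin n) (Fin r) ℂ}
    (h : PSEquiv (ones, Y) (ones, Y')) : ∃ σ : Equiv.Perm (Fin r), Y.submatrix id σ = Y' := by
  obtain ⟨G, hG, hones_mul : ones = ones * G, hY' : Y' = Y * (G⁻¹)ᵀ⟩ := h
  have hsum : ∀ j, ∑ i, G i j = 1 := fun j => by
    have hj : ones 0 j = (ones * G) 0 j := by rw [← hones_mul]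
    simpa [Matrix.mul_apply, hones] using hj.symm
  obtain ⟨τ, rfl⟩ := hG.exists_eq_permMatrix hsum
  refine ⟨τ.symm, ?_⟩
  rw [hY', Matrix.inv_permMatrix_transpose, PEquiv.mul_toMatrix_toPEquiv]

theorem mul_transpose_add_single_sub_single {l m n α : Type*} [Fintype n] [DecidableEq m]
    [DecidableEq n] [Ring α] {ones : Matrix l n α} (hones : ∀ a b, ones a b = 1)
    (Y : Matrix m n α) (k : m) (i j : n) (t : α) :
    ones * (Y + single k i t - single k j t)ᵀ = ones * Yᵀ := by
  have hsingle : ones * single i k t = ones * single j k t := by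
    ext a b
    by_cases hb : b = k
    · subst hb; simp [hones]
    · simp [hb]
  simp [Matrix.mul_add, Matrix.mul_sub, hsingle]

theorem SuppSub.add_single_sub_single {a b : ℕ} {Y : Matrix (Fin a) (Fin b) ℂ}
    {S : Set (Fin a × Fin b)} (hY : SuppSub Y S) {k : Fin a} {i j : Fin b}
    (hki : Y k i ≠ 0) (hkj : Y k j ≠ 0) (t : ℂ) :
    SuppSub (Y + single k i t - single k j t) S := by
  intro p q hpq
  by_cases hi : k = p ∧ i = q
  · obtain ⟨rfl, rfl⟩ := hi; exact hY _ _ hki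
  by_cases hj : k = p ∧ j = q
  · obtain ⟨rfl, rfl⟩ := hj; exact hY _ _ hkj
  apply hY
  simpa [single_apply_of_ne (h := hi), single_apply_of_ne (h := hj)] using hpq

theorem infinite_range_add_single_sub_single {m n α : Type*} [DecidableEq m] [DecidableEq n]
    [Ring α] [Infinite α] (Y : Matrix m n α) (k : m) {i j : n} (hij : i ≠ j) :
    (Set.range fun t : α => Y + single k i t - single k j t).Infinite := by
  refine Set.infinite_range_of_injective fun t t' htt' => ?_
  simpa [hij.symm] using congrFun (congrFun htt' k) i

theorem stmt19 {n r : ℕ} (Th : Set (Set (Fin n × Fin r)))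
    (Y : Matrix (Fin n) (Fin r) ℂ)
    (ones : Matrix (Fin 1) (Fin r) ℂ) (hones : ∀ i j, ones i j = 1)
    (h : (ones, Y) ∈ PSUniqueSet {p | p.1 = ones ∧ p.2 ∈ SigmaTh Th}) :
    Pairwise (fun i j : Fin r =>
      Disjoint {k : Fin n | Y k i ≠ 0} {k : Fin n | Y k j ≠ 0}) := by
  intro i j hij
  refine Set.disjoint_left.2 fun k (hki : Y k i ≠ 0) (hkj : Y k j ≠ 0) => ?_
  obtain ⟨⟨-, S, hS, hYS⟩, huniq⟩ := h
  have hperm : ∀ t : ℂ,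
      ∃ σ : Equiv.Perm (Fin r), Y.submatrix id σ = Y + single k i t - single k j t :=
    fun t => PSEquiv.exists_submatrix_eq_of_ones hones <|
      huniq _ ⟨rfl, S, hS, hYS.add_single_sub_single hki hkj t⟩
        (mul_transpose_add_single_sub_single hones Y k i j t)
  exact infinite_range_add_single_sub_single Y k hij <|
    (Set.finite_range _).subset (Set.range_subset_iff.2 hperm)
end
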